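/- Let T₁ and T₂ be any two full binary trees each with d ≥ 2 leaves, modeling two merge orders for the same d tensor-ring factors of common dimension Ĩ ≥ 2 and tensor ring rank R ≥ 1. Then flops(T₁) ≤ 2·flops(T₂); that is, the worst merge order is at most twice as expensive in flops as the best merge order. -/
import Mathlib


/-- A full binary tree: every node is a leaf or has exactly two children. -/
inductive FullBinTree where
  | leaf : FullBinTree
  | node : FullBinTree → FullBinTree → FullBinTree

/-- Number of leaf descendants of (the root of) a tree. -/
def FullBinTree.leaves : FullBinTree → ℕ
  | .leaf => 1
  | .node l r => l.leaves + r.leaves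

/-- Total flop cost of the merge order encoded by a full binary tree:
each internal node `v` contributes `2 * R^3 * It ^ (leaves v)` (`It` = Ĩ, the common
dimension of the factors), leaves contribute 0. -/
def FullBinTree.flops (R It : ℕ) : FullBinTree → ℕ
  | .leaf => 0
  | .node l r => l.flops R It + r.flops R It + 2 * R ^ 3 * It ^ (l.leaves + r.leaves)

lemma FullBinTree.one_le_leaves : ∀ T : FullBinTree, 1 ≤ T.leaves
  | .leaf => le_refl 1
  | .node l r => by
      have := l.one_le_leaves
      simp [FullBinTree.leaves]; omega

lemma FullBinTree.flops_upper (R It : ℕ) (hIt : 2 ≤ It) :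
    ∀ T : FullBinTree, T.flops R It + 4 * R ^ 3 * It ≤ 4 * R ^ 3 * It ^ T.leaves
  | .leaf => by simp [FullBinTree.flops, FullBinTree.leaves]
  | .node l r => by
      have hl := FullBinTree.flops_upper R It hIt l
      have hr := FullBinTree.flops_upper R It hIt r
      have ha : (2:ℕ) ≤ It ^ l.leaves :=
        le_trans (by simpa using Nat.pow_le_pow_left hIt 1)
          (Nat.pow_le_pow_right (by omega) l.one_le_leaves)
      have hb : (2:ℕ) ≤ It ^ r.leaves :=
        le_trans (by simpa using Nat.pow_le_pow_left hIt 1)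
          (Nat.pow_le_pow_right (by omega) r.one_le_leaves)
      have hab : It ^ (l.leaves + r.leaves) = It ^ l.leaves * It ^ r.leaves := pow_add It _ _
      have key : 2 * It ^ l.leaves + 2 * It ^ r.leaves ≤ It ^ (l.leaves + r.leaves) + 2 * It := by
        rw [hab]; nlinarith
      simp only [FullBinTree.flops, FullBinTree.leaves]
      nlinarith [Nat.zero_le (R ^ 3)]

lemma FullBinTree.flops_lower (R It : ℕ) (T : FullBinTree) (h : 2 ≤ T.leaves) :
    2 * R ^ 3 * It ^ T.leaves ≤ T.flops R It := by
  cases T with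
  | leaf => simp [FullBinTree.leaves] at h
  | node l r => simp [FullBinTree.flops, FullBinTree.leaves]

/-- Any two merge orders (full binary trees with the same number `d ≥ 2` of leaves,
common dimension `Ĩ ≥ 2`, tensor ring rank `R ≥ 1`) have flop counts within a
factor of 2 of each other: the worst order is at most twice the best order. -/
theorem flops_within_factor_two (R It d : ℕ) (hR : 1 ≤ R) (hIt : 2 ≤ It) (hd : 2 ≤ d)
    (T₁ T₂ : FullBinTree) (hT₁ : T₁.leaves = d) (hT₂ : T₂.leaves = d) :
    T₁.flops R It ≤ 2 * T₂.flops R It := by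
  have h1 := FullBinTree.flops_upper R It hIt T₁
  have h2 := FullBinTree.flops_lower R It T₂ (by omega)
  rw [hT₁] at h1
  rw [hT₂] at h2
  calc T₁.flops R It ≤ 4 * R ^ 3 * It ^ d := by omega
    _ = 2 * (2 * R ^ 3 * It ^ d) := by ring
    _ ≤ 2 * T₂.flops R It := by omega
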